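/- Let T be a triangulation of the convex n-gon, let e ∈ T, and let f ≠ e be a chord such that (T \ {e}) ∪ {f} is again a triangulation. Then f crosses e, and f crosses no other chord of T; that is, the chord introduced by a flip crosses exactly one chord of the original triangulation, namely the chord removed. -/
import Mathlib


namespace FlipCut

/-- `x` lies strictly inside the open cyclic arc from `a` to `b`
(going forward in the cyclic order on `ZMod n`). -/
def Btw (n : ℕ) (a x b : ZMod n) : Prop :=
  0 < (x - a).val ∧ (x - a).val < (b - a).val

/-- An unordered pair of vertices of the convex `n`-gon is a *chord*:
its two endpoints are distinct and not cyclically adjacent. -/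
def IsChord (n : ℕ) (e : Sym2 (ZMod n)) : Prop :=
  ¬ e.IsDiag ∧ ∀ a ∈ e, ∀ b ∈ e, a ≠ b → b ≠ a + 1 ∧ b ≠ a - 1

/-- Two chords *cross*: they can be written as `{a, b}` and `{c, d}` where `c`
lies strictly inside the open cyclic arc from `a` to `b` and `d` lies strictly
inside the open cyclic arc from `b` to `a` (i.e. the endpoint pairs separate
each other in the cyclic order, equivalently exactly one of `c, d` lies in the
open cyclic arc from `a` to `b`). -/
def Crosses (n : ℕ) (e f : Sym2 (ZMod n)) : Prop :=
  ∃ a b c d : ZMod n, e = s(a, b) ∧ f = s(c, d) ∧ Btw n a c b ∧ Btw n b d a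

/-- A *triangulation* of the convex `n`-gon: a set of exactly `n - 3`
pairwise non-crossing chords. -/
def IsTriangulation (n : ℕ) (T : Finset (Sym2 (ZMod n))) : Prop :=
  T.card = n - 3 ∧ (∀ e ∈ T, IsChord n e) ∧
    ∀ e ∈ T, ∀ f ∈ T, e ≠ f → ¬ Crosses n e f

/-- Triangulations `T` and `T'` differ by a *flip*: their symmetric difference
has exactly two chords. -/
def FlipAdj (n : ℕ) (T T' : Finset (Sym2 (ZMod n))) : Prop :=
  (symmDiff T T').card = 2

/-- `T` *avoids* `X`: `T` contains no chord of `X`. -/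
def Avoids (n : ℕ) (T X : Finset (Sym2 (ZMod n))) : Prop :=
  ∀ e ∈ X, e ∉ T

/-- A vertex of the flip graph `F₋ₓ`: a triangulation avoiding `X`. -/
def AvoidingTri (n : ℕ) (X T : Finset (Sym2 (ZMod n))) : Prop :=
  IsTriangulation n T ∧ Avoids n T X

/-- A single edge of the flip graph `F₋ₓ`: both endpoints are triangulations
avoiding `X` and they differ by a flip. -/
def FlipStep (n : ℕ) (X T T' : Finset (Sym2 (ZMod n))) : Prop :=
  AvoidingTri n X T ∧ AvoidingTri n X T' ∧ FlipAdj n T T'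

/-- `S` and `T` are joined by a path in the flip graph `F₋ₓ`: a sequence of
flips in which every intermediate triangulation avoids `X`. -/
def FlipConn (n : ℕ) (X S T : Finset (Sym2 (ZMod n))) : Prop :=
  Relation.ReflTransGen (FlipStep n X) S T

/-- The flip graph `F₋ₓ` is connected. -/
def FlipGraphConnected (n : ℕ) (X : Finset (Sym2 (ZMod n))) : Prop :=
  ∀ S T, AvoidingTri n X S → AvoidingTri n X T → FlipConn n X S T

/-- `X` is a *flip cut set*: a set of chords such that the flip graph `F₋ₓ`
is disconnected. -/
def IsFlipCutSet (n : ℕ) (X : Finset (Sym2 (ZMod n))) : Prop :=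
  (∀ e ∈ X, IsChord n e) ∧ ¬ FlipGraphConnected n X


section Aux
variable {n : ℕ} [NeZero n]

lemma btw_def (a x b : ZMod n) :
    Btw n a x b ↔ 0 < (x - a).val ∧ (x - a).val < (b - a).val := Iff.rfl

lemma add_coord (o x : ZMod n) : o + (((x - o).val : ℕ) : ZMod n) = x := by
  rw [ZMod.natCast_val, ZMod.cast_id]
  ring

lemma coord_inj {o x y : ZMod n} (h : (x - o).val = (y - o).val) : x = y := by
  have hx := add_coord o x
  have hy := add_coord o y
  rw [h] at hx
  exact hx.symm.trans hy

lemma sub_val_le {o x y : ZMod n} (h : (x - o).val ≤ (y - o).val) :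
    (y - x).val = (y - o).val - (x - o).val := by
  have hlt := ZMod.val_lt (y - o)
  have hyx : y - x = ((((y - o).val - (x - o).val : ℕ)) : ZMod n) := by
    rw [Nat.cast_sub h, ZMod.natCast_val, ZMod.natCast_val, ZMod.cast_id, ZMod.cast_id]
    ring
  rw [hyx, ZMod.val_natCast, Nat.mod_eq_of_lt (by omega)]

lemma sub_val_gt {o x y : ZMod n} (h : (y - o).val < (x - o).val) :
    (y - x).val = (y - o).val + n - (x - o).val := by
  have hltx := ZMod.val_lt (x - o)
  have hx : (x - o).val ≤ (y - o).val + n := by omega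
  have hyx : y - x = ((((y - o).val + n - (x - o).val : ℕ)) : ZMod n) := by
    rw [Nat.cast_sub hx]
    push_cast [ZMod.natCast_self]
    rw [ZMod.natCast_val, ZMod.natCast_val, ZMod.cast_id, ZMod.cast_id]
    ring
  rw [hyx, ZMod.val_natCast, Nat.mod_eq_of_lt (by omega)]

lemma coord_succ {o x y : ZMod n} (h : (y - o).val = (x - o).val + 1) : y = x + 1 := by
  have hx := add_coord o x
  have hy := add_coord o y
  rw [h] at hy
  push_cast at hy
  rw [← hy, ← add_assoc, hx]

lemma crosses_of_sep {o u v w z : ZMod n}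
    (h1 : (u - o).val < (w - o).val) (h2 : (w - o).val < (v - o).val)
    (h3 : (v - o).val < (z - o).val) :
    Crosses n s(u, v) s(w, z) := by
  refine ⟨u, v, w, z, rfl, rfl, ?_, ?_⟩
  · rw [btw_def, sub_val_le h1.le, sub_val_le (h1.trans h2).le]
    omega
  · have := ZMod.val_lt (z - o)
    rw [btw_def, sub_val_le h3.le, sub_val_gt (h1.trans h2)]
    omega

lemma crosses_symm {e f : Sym2 (ZMod n)} (h : Crosses n e f) : Crosses n f e := by
  obtain ⟨a, b, c, d, rfl, rfl, hc, hd⟩ := h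
  rw [btw_def] at hc hd
  have haa : (a - a).val = 0 := by rw [sub_self, ZMod.val_zero]
  have hBn := ZMod.val_lt (b - a)
  have hDn := ZMod.val_lt (d - a)
  have hab : (a - b).val = (a - a).val + n - (b - a).val :=
    sub_val_gt (by omega)
  have hBD : (b - a).val < (d - a).val := by
    rcases lt_trichotomy ((d - a).val) ((b - a).val) with h' | h' | h'
    · have hdb := sub_val_gt (o := a) (x := b) (y := d) h'
      omega
    · have : d = b := coord_inj h'
      rw [this, sub_self, ZMod.val_zero] at hd
      omega
    · exact h'
  refine ⟨c, d, b, a, rfl, Sym2.eq_swap, ?_, ?_⟩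
  · rw [btw_def, sub_val_le hc.2.le, sub_val_le (hc.2.trans hBD).le]
    omega
  · rw [btw_def, sub_val_gt (o := a) (x := d) (y := a) (by omega),
      sub_val_gt (o := a) (x := d) (y := c) (by omega)]
    omega

lemma sym2_rep {α : Type*} (e : Sym2 α) : ∃ u v, e = s(u, v) := by
  induction e using Sym2.ind with | _ u v => exact ⟨u, v, rfl⟩

lemma sym2_rep_sorted (o : ZMod n) (e : Sym2 (ZMod n)) :
    ∃ u v, e = s(u, v) ∧ (u - o).val ≤ (v - o).val := by
  obtain ⟨u, v, rfl⟩ := sym2_rep e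
  rcases le_total ((u - o).val) ((v - o).val) with h | h
  · exact ⟨u, v, rfl, h⟩
  · exact ⟨v, u, Sym2.eq_swap, h⟩


/-- Contraction map collapsing the interval `(c1, c1+d+1)` to nothing. -/
def contract (c1 d : ℕ) (p : ℕ × ℕ) : ℕ × ℕ :=
  (if p.1 ≤ c1 then p.1 else p.1 - d, if p.2 ≤ c1 then p.2 else p.2 - d)

lemma contract_fst (c1 d : ℕ) (p : ℕ × ℕ) :
    (contract c1 d p).1 = if p.1 ≤ c1 then p.1 else p.1 - d := rfl

lemma contract_snd (c1 d : ℕ) (p : ℕ × ℕ) :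
    (contract c1 d p).2 = if p.2 ≤ c1 then p.2 else p.2 - d := rfl

/-- Linear bound: a family of pairwise non-crossing, non-adjacent "chords"
on the path `0, 1, ..., L` has at most `L - 1` members. -/
lemma lin_bound : ∀ (L : ℕ) (s : Finset (ℕ × ℕ)),
    (∀ p ∈ s, p.1 + 2 ≤ p.2 ∧ p.2 ≤ L) →
    (∀ p ∈ s, ∀ q ∈ s, ¬(p.1 < q.1 ∧ q.1 < p.2 ∧ p.2 < q.2)) →
    s.card ≤ L - 1 := by
  intro L
  induction L using Nat.strong_induction_on with
  | _ L ih =>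
  intro s hv hnc
  rcases s.eq_empty_or_nonempty with rfl | hne
  · simp
  obtain ⟨c, hc, hmin⟩ := s.exists_min_image (fun p => p.2 - p.1) hne
  have hcv := hv c hc
  set d := c.2 - c.1 - 1 with hd
  have hclean : ∀ p ∈ s, p ≠ c → (p.1 ≤ c.1 ∨ c.2 ≤ p.1) ∧ (p.2 ≤ c.1 ∨ c.2 ≤ p.2) := by
    intro p hp hpc
    have h1 := hnc p hp c hc
    have h2 := hnc c hc p hp
    have h3 := hmin p hp
    have h4 := hv p hp
    have h5 : p.1 ≠ c.1 ∨ p.2 ≠ c.2 := by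
      by_contra h
      push_neg at h
      exact hpc (Prod.ext h.1 h.2)
    omega
  have hdom : ∀ p ∈ s.erase c, (p.1 ≤ c.1 ∨ c.2 ≤ p.1) ∧ (p.2 ≤ c.1 ∨ c.2 ≤ p.2) := by
    intro p hp
    exact hclean p (Finset.mem_of_mem_erase hp) (Finset.ne_of_mem_erase hp)
  have hmono : ∀ x y : ℕ, (x ≤ c.1 ∨ c.2 ≤ x) → (y ≤ c.1 ∨ c.2 ≤ y) →
      ((if x ≤ c.1 then x else x - d) < (if y ≤ c.1 then y else y - d) ↔ x < y) := by
    intro x y hx hy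
    split_ifs <;> omega
  have hinj : Set.InjOn (contract c.1 d) (s.erase c : Set (ℕ × ℕ)) := by
    intro p hp q hq hpq
    have hdp := hdom p (Finset.mem_coe.mp hp)
    have hdq := hdom q (Finset.mem_coe.mp hq)
    have e1 := congrArg Prod.fst hpq
    have e2 := congrArg Prod.snd hpq
    rw [contract_fst, contract_fst] at e1
    rw [contract_snd, contract_snd] at e2
    have m1 := hmono p.1 q.1 hdp.1 hdq.1
    have m2 := hmono q.1 p.1 hdq.1 hdp.1
    have m3 := hmono p.2 q.2 hdp.2 hdq.2
    have m4 := hmono q.2 p.2 hdq.2 hdp.2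
    exact Prod.ext (by omega) (by omega)
  have hv' : ∀ p ∈ (s.erase c).image (contract c.1 d), p.1 + 2 ≤ p.2 ∧ p.2 ≤ L - d := by
    intro p hp
    obtain ⟨q, hq, rfl⟩ := Finset.mem_image.mp hp
    have h1 := hdom q hq
    have h2 := hv q (Finset.mem_of_mem_erase hq)
    have h3 : q.1 ≠ c.1 ∨ q.2 ≠ c.2 := by
      by_contra h
      push_neg at h
      exact Finset.ne_of_mem_erase hq (Prod.ext h.1 h.2)
    rw [contract_fst, contract_snd]
    split_ifs <;> omega
  have hnc' : ∀ p ∈ (s.erase c).image (contract c.1 d),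
      ∀ q ∈ (s.erase c).image (contract c.1 d),
      ¬(p.1 < q.1 ∧ q.1 < p.2 ∧ p.2 < q.2) := by
    rintro p' hp' q' hq' ⟨h1, h2, h3⟩
    obtain ⟨p, hp, rfl⟩ := Finset.mem_image.mp hp'
    obtain ⟨q, hq, rfl⟩ := Finset.mem_image.mp hq'
    have hdp := hdom p hp
    have hdq := hdom q hq
    simp only [contract_fst, contract_snd] at h1 h2 h3
    have m1 := hmono p.1 q.1 hdp.1 hdq.1
    have m2 := hmono q.1 p.2 hdq.1 hdp.2
    have m3 := hmono p.2 q.2 hdp.2 hdq.2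
    exact hnc p (Finset.mem_of_mem_erase hp) q (Finset.mem_of_mem_erase hq)
      ⟨m1.mp h1, m2.mp h2, m3.mp h3⟩
  have hcard : ((s.erase c).image (contract c.1 d)).card = s.card - 1 := by
    rw [Finset.card_image_of_injOn hinj, Finset.card_erase_of_mem hc]
  have hrec := ih (L - d) (by omega) ((s.erase c).image (contract c.1 d)) hv' hnc'
  have hpos := Finset.card_pos.mpr hne
  omega




lemma arc_bound (a : ZMod n) (L : ℕ) (S : Finset (Sym2 (ZMod n)))
    (hchord : ∀ e ∈ S, IsChord n e)
    (hnc : ∀ e ∈ S, ∀ f ∈ S, e ≠ f → ¬Crosses n e f)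
    (harc : ∀ e ∈ S, ∀ x ∈ e, (x - a).val ≤ L) :
    S.card ≤ L - 1 := by
  classical
  set F : Sym2 (ZMod n) → ℕ × ℕ :=
    Sym2.lift ⟨fun x y => (min ((x - a).val) ((y - a).val), max ((x - a).val) ((y - a).val)),
      fun x y => by dsimp only; rw [min_comm, max_comm]⟩ with hF
  have hrecon : ∀ e : Sym2 (ZMod n), ∃ u v, e = s(u, v) ∧ (u - a).val ≤ (v - a).val ∧
      F e = ((u - a).val, (v - a).val) := by
    intro e
    obtain ⟨u, v, rfl, h⟩ := sym2_rep_sorted a e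
    refine ⟨u, v, rfl, h, ?_⟩
    simp only [hF, Sym2.lift_mk]
    rw [min_eq_left h, max_eq_right h]
  have hinj : Set.InjOn F S := by
    intro e he' f hf' hef
    obtain ⟨u, v, rfl, huv, hFe⟩ := hrecon e
    obtain ⟨w, z, rfl, hwz, hFf⟩ := hrecon f
    rw [hFe, hFf] at hef
    have h1 : (u - a).val = (w - a).val := congrArg Prod.fst hef
    have h2 : (v - a).val = (z - a).val := congrArg Prod.snd hef
    rw [coord_inj h1, coord_inj h2]
  have hcard : (S.image F).card = S.card := Finset.card_image_of_injOn hinj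
  rw [← hcard]
  apply lin_bound L
  · intro p hp
    obtain ⟨e, he, rfl⟩ := Finset.mem_image.mp hp
    obtain ⟨u, v, rfl, huv, hFe⟩ := hrecon e
    have hu : u ∈ s(u, v) := Sym2.mem_mk_left u v
    have hvv : v ∈ s(u, v) := Sym2.mem_mk_right u v
    have hch := hchord _ he
    have hne : u ≠ v := fun h => hch.1 (Sym2.mk_isDiag_iff.mpr h)
    have hadj := hch.2 u hu v hvv hne
    have hcne : (u - a).val ≠ (v - a).val := fun h => hne (coord_inj h)
    have hsucc : (v - a).val ≠ (u - a).val + 1 := fun h => hadj.1 (coord_succ h)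
    have hU := harc _ he u hu
    have hV := harc _ he v hvv
    rw [hFe]
    dsimp only
    omega
  · rintro p' hp' q' hq' ⟨h1, h2, h3⟩
    obtain ⟨e, he, rfl⟩ := Finset.mem_image.mp hp'
    obtain ⟨f, hfm, rfl⟩ := Finset.mem_image.mp hq'
    obtain ⟨u, v, rfl, huv, hFe⟩ := hrecon e
    obtain ⟨w, z, rfl, hwz, hFf⟩ := hrecon f
    rw [hFe, hFf] at h1 h2 h3
    dsimp only at h1 h2 h3
    have hef : s(u, v) ≠ s(w, z) := by
      intro hh
      rw [hh, hFf] at hFe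
      have := congrArg Prod.fst hFe
      dsimp only at this
      omega
    exact hnc _ he _ hfm hef (crosses_of_sep h1 h2 h3)

lemma noncross_bound (S : Finset (Sym2 (ZMod n)))
    (hchord : ∀ e ∈ S, IsChord n e)
    (hnc : ∀ e ∈ S, ∀ f ∈ S, e ≠ f → ¬Crosses n e f)
    (hne : S.Nonempty) : S.card ≤ n - 3 := by
  classical
  obtain ⟨e₀, he⟩ := hne
  obtain ⟨a, b, rfl⟩ := sym2_rep e₀
  have hch := hchord _ he
  have hab : a ≠ b := fun h => hch.1 (Sym2.mk_isDiag_iff.mpr h)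
  have hadj := hch.2 a (Sym2.mem_mk_left a b) b (Sym2.mem_mk_right a b) hab
  have haa : (a - a).val = 0 := by rw [sub_self, ZMod.val_zero]
  have hbb : (b - b).val = 0 := by rw [sub_self, ZMod.val_zero]
  have hln : (b - a).val < n := ZMod.val_lt _
  have hl0 : (b - a).val ≠ 0 := by
    intro h
    exact hab (coord_inj (show (a - a).val = (b - a).val by omega))
  have hl1 : (b - a).val ≠ 1 := by
    intro h
    exact hadj.1 (coord_succ (show (b - a).val = (a - a).val + 1 by omega))
  have hl2 : (b - a).val ≠ n - 1 := by
    intro h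
    apply hadj.2
    have hb := add_coord a b
    rw [h] at hb
    rw [← hb, Nat.cast_sub (by omega : 1 ≤ n), ZMod.natCast_self, Nat.cast_one]
    ring
  have hba : (a - b).val = n - (b - a).val := by
    have h := sub_val_gt (o := a) (x := b) (y := a) (by omega)
    omega
  have key : ∀ x : ZMod n, (x - a).val = 0 ∨ (b - a).val ≤ (x - a).val →
      (x - b).val ≤ n - (b - a).val := by
    intro x hx
    rcases hx with hx | hx
    · have hxa : x = a := coord_inj (show (x - a).val = (a - a).val by omega)
      rw [hxa, hba]
    · have h := sub_val_le (o := a) (x := b) (y := x) hx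
      have := ZMod.val_lt (x - a)
      omega
  set S₁ := S.filter (fun g => ∀ x ∈ g, (x - a).val ≤ (b - a).val) with hS₁
  set S₂ := S.filter (fun g => ∀ x ∈ g, (x - b).val ≤ n - (b - a).val) with hS₂
  have cover : ∀ g ∈ S, g ∈ S₁ ∪ S₂ := by
    intro g hg
    obtain ⟨u, v, rfl, huv⟩ := sym2_rep_sorted a g
    have hbad : ¬(0 < (u - a).val ∧ (u - a).val < (b - a).val ∧ (b - a).val < (v - a).val) := by
      rintro ⟨x1, x2, x3⟩
      have hcr := crosses_of_sep (o := a) (u := a) (v := b) (w := u) (z := v)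
        (by omega) x2 x3
      refine hnc _ he _ hg ?_ hcr
      intro hh
      have hu : u ∈ s(a, b) := by rw [hh]; exact Sym2.mem_mk_left u v
      rcases Sym2.mem_iff.mp hu with h' | h'
      · rw [h'] at x1; omega
      · rw [h'] at x2; omega
    by_cases hc1 : (v - a).val ≤ (b - a).val
    · refine Finset.mem_union.mpr (Or.inl (Finset.mem_filter.mpr ⟨hg, ?_⟩))
      intro x hx
      rcases Sym2.mem_iff.mp hx with rfl | rfl
      · omega
      · omega
    · refine Finset.mem_union.mpr (Or.inr (Finset.mem_filter.mpr ⟨hg, ?_⟩))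
      intro x hx
      rcases Sym2.mem_iff.mp hx with rfl | rfl
      · exact key x (by omega)
      · exact key x (by omega)
  have hU : S₁ ∪ S₂ = S := by
    apply Finset.Subset.antisymm
    · intro g hg
      rcases Finset.mem_union.mp hg with h | h <;> exact (Finset.mem_filter.mp h).1
    · intro g hg
      exact cover g hg
  have he1 : s(a, b) ∈ S₁ := by
    refine Finset.mem_filter.mpr ⟨he, ?_⟩
    intro x hx
    rcases Sym2.mem_iff.mp hx with rfl | rfl <;> omega
  have he2 : s(a, b) ∈ S₂ := by
    refine Finset.mem_filter.mpr ⟨he, ?_⟩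
    intro x hx
    rcases Sym2.mem_iff.mp hx with rfl | rfl <;> omega
  have hcap : 0 < (S₁ ∩ S₂).card :=
    Finset.card_pos.mpr ⟨_, Finset.mem_inter.mpr ⟨he1, he2⟩⟩
  have hsum := Finset.card_union_add_card_inter S₁ S₂
  have hb1 : S₁.card ≤ (b - a).val - 1 :=
    arc_bound a ((b - a).val) S₁
      (fun e h => hchord e (Finset.mem_filter.mp h).1)
      (fun e h f h' => hnc e (Finset.mem_filter.mp h).1 f (Finset.mem_filter.mp h').1)
      (fun e h => (Finset.mem_filter.mp h).2)
  have hb2 : S₂.card ≤ (n - (b - a).val) - 1 :=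
    arc_bound b (n - (b - a).val) S₂
      (fun e h => hchord e (Finset.mem_filter.mp h).1)
      (fun e h f h' => hnc e (Finset.mem_filter.mp h).1 f (Finset.mem_filter.mp h').1)
      (fun e h => (Finset.mem_filter.mp h).2)
  rw [hU] at hsum
  omega

end Aux



/-- The chord introduced by a flip crosses exactly one chord
of the original triangulation, namely the chord removed: if `T` is a
triangulation, `e ∈ T`, and `f ≠ e` is a chord with `(T \ {e}) ∪ {f}` a
triangulation, then `f` crosses `e` and `f` crosses no other chord of `T`. -/
theorem flip_chord_crosses_only_removed (n : ℕ) (hn : 3 ≤ n)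
    (T : Finset (Sym2 (ZMod n))) (hT : IsTriangulation n T)
    (e : Sym2 (ZMod n)) (he : e ∈ T)
    (f : Sym2 (ZMod n)) (hf : IsChord n f) (hfe : f ≠ e)
    (hflip : IsTriangulation n (insert f (T.erase e))) :
    Crosses n f e ∧ ∀ g ∈ T, g ≠ e → ¬ Crosses n f g := by
  classical
  have hcT := hT.1
  have hn4 : 4 ≤ n := by
    have h1 := Finset.card_pos.mpr ⟨e, he⟩
    omega
  haveI : NeZero n := ⟨by omega⟩
  have hfT : f ∉ T := by
    intro hf'
    have h1 : insert f (T.erase e) = T.erase e :=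
      Finset.insert_eq_self.mpr (Finset.mem_erase.mpr ⟨hfe, hf'⟩)
    have h2 := hflip.1
    rw [h1, Finset.card_erase_of_mem he, hcT] at h2
    omega
  have part2 : ∀ g ∈ T, g ≠ e → ¬Crosses n f g := by
    intro g hg hge
    have hg' : g ∈ insert f (T.erase e) :=
      Finset.mem_insert_of_mem (Finset.mem_erase.mpr ⟨hge, hg⟩)
    exact hflip.2.2 f (Finset.mem_insert_self f _) g hg' (fun h => hfT (h ▸ hg))
  refine ⟨?_, part2⟩
  by_contra hnfe
  have hall : ∀ g ∈ T, ¬Crosses n f g := by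
    intro g hg
    rcases eq_or_ne g e with rfl | hge
    · exact hnfe
    · exact part2 g hg hge
  have hS : (insert f T).card ≤ n - 3 := by
    apply noncross_bound
    · intro g hg
      rcases Finset.mem_insert.mp hg with rfl | hg'
      · exact hf
      · exact hT.2.1 g hg'
    · intro g hg h hh hgh
      rcases Finset.mem_insert.mp hg with rfl | hg' <;>
        rcases Finset.mem_insert.mp hh with rfl | hh'
      · exact absurd rfl hgh
      · exact hall h hh'
      · exact fun hc => hall g hg' (crosses_symm hc)
      · exact hT.2.2 g hg' h hh' hgh
    · exact ⟨f, Finset.mem_insert_self f T⟩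
  rw [Finset.card_insert_of_notMem hfT, hcT] at hS
  omega

end FlipCut
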